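/- Let C be a 3×3 unitary matrix with entries a^{(i,j)}, e^{iΔ} = det C, and λ ∈ ℝ with a^{(1,1)}e^{iλ} − e^{iΔ} conj(a^{(3,3)}) ≠ 0. Then the two eigenvalues ζ⁺, ζ⁻ of the transfer matrix T(λ) (the roots of z² − (tr T(λ))z + det T(λ)) satisfy |ζ⁺| ≠ |ζ⁻| if and only if |tr T(λ)| > 2, where tr T(λ) = (e^{iλ}(e^{iλ} − a^{(2,2)}) − e^{iΔ}(e^{−iλ} − conj(a^{(2,2)})))/(a^{(1,1)}e^{iλ} − e^{iΔ} conj(a^{(3,3)})). -/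

import Mathlib

open Complex Matrix ComplexConjugate

noncomputable section

/-- The transfer matrix `T(λ)` of a 3×3 coin matrix `M`. -/
def transfer (M : Matrix (Fin 3) (Fin 3) ℂ) (lam : ℝ) : Matrix (Fin 2) (Fin 2) ℂ :=
  (M 0 0 * Complex.exp (lam * Complex.I) - M.det * conj (M 2 2))⁻¹ •
    !![Complex.exp (lam * Complex.I) * (Complex.exp (lam * Complex.I) - M 1 1),
        -(M 0 2 * Complex.exp (lam * Complex.I)) - M.det * conj (M 2 0);
        M 2 0 * Complex.exp (lam * Complex.I) + M.det * conj (M 0 2),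
        -(M.det * (Complex.exp (-(lam * Complex.I)) - conj (M 1 1)))]

/-! The eigenvalues have product `det T`, where `‖det T‖ = 1` and `conj (tr T) * det T = tr T`:
writing `T = c⁻¹ • A`, unitarity of `M` gives `det A = -(det M * e^{iλ}) * c * conj c` and
`conj (tr A) * -(det M * e^{iλ}) = tr A`. If `‖ζ₁‖ = ‖ζ₂‖`, both have modulus one and `‖tr T‖ ≤ 2`.
Conversely `x = (ζ₁ - ζ₂) * conj (tr T)` satisfies `x² = ‖tr T‖² (‖tr T‖² - 4)`, a nonpositive real
when `‖tr T‖ ≤ 2`, so `Re x = ‖ζ₁‖² - ‖ζ₂‖²` vanishes. -/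

namespace Complex

theorem re_eq_zero_of_sq_eq_ofReal_nonpos {x : ℂ} {s : ℝ} (hs : s ≤ 0) (h : x ^ 2 = s) :
    x.re = 0 := by
  have hre : x.re * x.re - x.im * x.im = s := by simpa [sq] using congrArg re h
  have him : x.re * x.im + x.im * x.re = 0 := by simpa [sq] using congrArg im h
  rcases mul_eq_zero.mp (by linarith : x.re * x.im = 0) with h0 | h0
  · exact h0
  · nlinarith

theorem normSq_sub_normSq (a b : ℂ) : normSq a - normSq b = ((a - b) * conj (a + b)).re := by
  simp only [mul_re, sub_re, sub_im, map_add, add_re, add_im, conj_re, conj_im, normSq_apply]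
  ring

theorem norm_eq_norm_of_conj_add_mul_eq_add {a b : ℂ} (h : conj (a + b) * (a * b) = a + b)
    (h2 : ‖a + b‖ ≤ 2) : ‖a‖ = ‖b‖ := by
  set x := (a - b) * conj (a + b)
  have hx : x ^ 2 = ((‖a + b‖ ^ 2 * (‖a + b‖ ^ 2 - 4) : ℝ) : ℂ) := by
    push_cast
    linear_combination (-4 * conj (a + b)) * h
      + ((a + b) * conj (a + b) + ‖a + b‖ ^ 2 - 4) * mul_conj' (a + b)
  have hre : x.re = 0 :=
    re_eq_zero_of_sq_eq_ofReal_nonpos (mul_nonpos_of_nonneg_of_nonpos (by positivity)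
      (by nlinarith [norm_nonneg (a + b)])) hx
  rw [norm_def, norm_def, ← sub_eq_zero.mp ((normSq_sub_normSq a b).trans hre)]

theorem norm_add_le_two_of_norm_eq {a b : ℂ} (hab : ‖a * b‖ = 1) (h : ‖a‖ = ‖b‖) :
    ‖a + b‖ ≤ 2 := by
  have ha : ‖a‖ = 1 := by
    rw [norm_mul, ← h] at hab
    nlinarith [norm_nonneg a]
  calc ‖a + b‖ ≤ ‖a‖ + ‖b‖ := norm_add_le a b
    _ = 2 := by rw [← h, ha]; norm_num

theorem norm_ne_norm_iff_two_lt_norm_add {a b : ℂ} (hab : ‖a * b‖ = 1)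
    (h : conj (a + b) * (a * b) = a + b) : ‖a‖ ≠ ‖b‖ ↔ 2 < ‖a + b‖ := by
  rw [← not_le, not_iff_not]
  exact ⟨norm_add_le_two_of_norm_eq hab, norm_eq_norm_of_conj_add_mul_eq_add h⟩

end Complex

theorem Matrix.conj_trace_mul_det_inv_smul_fin_two {A : Matrix (Fin 2) (Fin 2) ℂ} {c u : ℂ}
    (hc : c ≠ 0) (hdet : A.det = u * (c * conj c)) (htr : conj A.trace * u = A.trace) :
    conj (c⁻¹ • A).trace * (c⁻¹ • A).det = (c⁻¹ • A).trace := by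
  have hc' : conj c ≠ 0 := (map_ne_zero _).mpr hc
  rw [trace_smul, det_smul, hdet, smul_eq_mul, map_mul, map_inv₀, Fintype.card_fin]
  field_simp
  exact htr

theorem Matrix.norm_det_inv_smul_fin_two {A : Matrix (Fin 2) (Fin 2) ℂ} {c u : ℂ} (hc : c ≠ 0)
    (hdet : A.det = u * (c * conj c)) (hu : ‖u‖ = 1) : ‖(c⁻¹ • A).det‖ = 1 := by
  rw [det_smul, hdet, Fintype.card_fin, norm_mul, norm_mul, norm_mul, Complex.norm_conj, hu,
    norm_pow, norm_inv]
  field_simp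

theorem Matrix.adjugate_eq_det_smul_star {n α : Type*} [Fintype n] [DecidableEq n] [CommRing α]
    [StarRing α] {A : Matrix n n α} (hA : A ∈ unitaryGroup n α) :
    A.adjugate = A.det • star A :=
  calc A.adjugate = star A * A * A.adjugate := by rw [mem_unitaryGroup_iff'.mp hA, one_mul]
    _ = A.det • star A := by rw [mul_assoc, mul_adjugate, Matrix.mul_smul, mul_one]

section UnitaryFinThree

variable {M : Matrix (Fin 3) (Fin 3) ℂ} (hM : M ∈ unitaryGroup (Fin 3) ℂ)
include hM

theorem det_mul_conj_det_of_mem_unitaryGroup : M.det * conj M.det = 1 :=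
  Unitary.mul_star_self_of_mem (det_of_mem_unitary hM)

theorem minor_one_one_eq_det_mul_conj_of_mem_unitaryGroup :
    M 0 0 * M 2 2 - M 0 2 * M 2 0 = M.det * conj (M 1 1) := by
  simpa [adjugate_fin_three, star_eq_conjTranspose, conjTranspose_apply] using
    congrFun₂ (adjugate_eq_det_smul_star hM) 1 1

theorem corner_normSq_sum_of_mem_unitaryGroup :
    M 0 0 * conj (M 0 0) + M 0 2 * conj (M 0 2) + M 2 0 * conj (M 2 0) + M 2 2 * conj (M 2 2) =
      1 + M 1 1 * conj (M 1 1) := by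
  have row (i : Fin 3) : ∑ j, M i j * conj (M i j) = 1 := by
    simpa [mul_apply] using congrFun₂ (mem_unitaryGroup_iff.mp hM) i i
  have col : ∑ i, conj (M i 1) * M i 1 = 1 := by
    simpa [mul_apply] using congrFun₂ (mem_unitaryGroup_iff'.mp hM) 1 1
  simp only [Fin.sum_univ_three] at row col
  linear_combination row 0 + row 2 - col

end UnitaryFinThree

/-- `transferNum` and `transferDen` are the numerator and denominator of `transfer`, with `exp (iλ)`
replaced by a complex number `E` and `exp (-iλ)` by `conj E`. -/
def transferNum (M : Matrix (Fin 3) (Fin 3) ℂ) (E : ℂ) : Matrix (Fin 2) (Fin 2) ℂ :=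
  !![E * (E - M 1 1), -(M 0 2 * E) - M.det * conj (M 2 0);
    M 2 0 * E + M.det * conj (M 0 2), -(M.det * (conj E - conj (M 1 1)))]

def transferDen (M : Matrix (Fin 3) (Fin 3) ℂ) (E : ℂ) : ℂ :=
  M 0 0 * E - M.det * conj (M 2 2)

theorem transfer_eq_inv_smul (M : Matrix (Fin 3) (Fin 3) ℂ) (lam : ℝ) :
    transfer M lam =
      (transferDen M (exp (lam * I)))⁻¹ • transferNum M (exp (lam * I)) := by
  have : exp (-(lam * I)) = conj (exp (lam * I)) := by
    rw [← exp_conj, map_mul, conj_ofReal, conj_I, mul_neg]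
  rw [transfer, transferDen, transferNum, this]

theorem trace_transfer (M : Matrix (Fin 3) (Fin 3) ℂ) (lam : ℝ) :
    (transfer M lam).trace =
      (exp (lam * I) * (exp (lam * I) - M 1 1) - M.det * (exp (-(lam * I)) - conj (M 1 1))) /
        (M 0 0 * exp (lam * I) - M.det * conj (M 2 2)) := by
  rw [transfer, trace_smul, trace_fin_two_of, smul_eq_mul, inv_mul_eq_div]
  ring

section TransferNum

variable {M : Matrix (Fin 3) (Fin 3) ℂ} (hM : M ∈ unitaryGroup (Fin 3) ℂ) {E : ℂ} (hE : ‖E‖ = 1)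
include hM hE

theorem det_transferNum :
    (transferNum M E).det = -(M.det * E) * (transferDen M E * conj (transferDen M E)) := by
  have hEE : E * conj E = 1 := by rw [mul_conj', hE]; norm_num
  have hDD := det_mul_conj_det_of_mem_unitaryGroup hM
  have hcof := minor_one_one_eq_det_mul_conj_of_mem_unitaryGroup hM
  have hcof' := congrArg conj hcof
  simp only [map_sub, map_mul, conj_conj] at hcof'
  rw [transferNum, transferDen, det_fin_two_of]
  simp only [map_sub, map_mul, conj_conj]
  linear_combination
    (-(M.det * E) + M.det * E * M 0 0 * conj (M 0 0) - M.det ^ 2 * conj (M 2 2) * conj (M 0 0)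
        + M.det * M 1 1) * hEE
      + (M.det * E * M 2 2 * conj (M 2 2) - E ^ 2 * M 0 0 * M 2 2 - M.det * M 1 1) * hDD
      - E ^ 2 * hcof - M.det ^ 2 * hcof' + M.det * E * corner_normSq_sum_of_mem_unitaryGroup hM

theorem conj_trace_transferNum_mul :
    conj (transferNum M E).trace * -(M.det * E) = (transferNum M E).trace := by
  have hEE : E * conj E = 1 := by rw [mul_conj', hE]; norm_num
  have hDD := det_mul_conj_det_of_mem_unitaryGroup hM
  rw [transferNum, trace_fin_two_of]
  simp only [map_add, map_sub, map_neg, map_mul, conj_conj]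
  linear_combination (-(M.det * conj E) + M.det * conj (M 1 1)) * hEE + E * (E - M 1 1) * hDD

end TransferNum

/-- for the transfer matrix `T(λ)` of a 3×3 unitary coin `M`, the two
eigenvalues `ζ⁺, ζ⁻` (roots of `z² − (tr T(λ)) z + det T(λ)`) have distinct moduli iff
`|tr T(λ)| > 2`, where `tr T(λ)` has the displayed closed form. -/
theorem transfer_eigenvalues_distinct_abs_iff (M : Matrix (Fin 3) (Fin 3) ℂ)
    (hM : M ∈ Matrix.unitaryGroup (Fin 3) ℂ) (lam : ℝ)
    (hden : M 0 0 * Complex.exp (lam * Complex.I) - M.det * conj (M 2 2) ≠ 0) :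
    (transfer M lam).trace =
      (Complex.exp (lam * Complex.I) * (Complex.exp (lam * Complex.I) - M 1 1) -
          M.det * (Complex.exp (-(lam * Complex.I)) - conj (M 1 1))) /
        (M 0 0 * Complex.exp (lam * Complex.I) - M.det * conj (M 2 2)) ∧
    ∀ ζ₁ ζ₂ : ℂ,
      ζ₁ + ζ₂ = (transfer M lam).trace → ζ₁ * ζ₂ = (transfer M lam).det →
      (‖ζ₁‖ ≠ ‖ζ₂‖ ↔ 2 < ‖(transfer M lam).trace‖) := by
  refine ⟨trace_transfer M lam, fun ζ₁ ζ₂ hsum hprod => ?_⟩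
  have hE := norm_exp_ofReal_mul_I lam
  have hdet := det_transferNum hM hE
  have hD : ‖-(M.det * exp (lam * I))‖ = 1 := by
    rw [norm_neg, norm_mul, hE, mul_one]
    exact CStarRing.norm_of_mem_unitary (det_of_mem_unitary hM)
  rw [transfer_eq_inv_smul] at hsum hprod ⊢
  rw [← hsum]
  refine norm_ne_norm_iff_two_lt_norm_add ?_ ?_
  · rw [hprod]
    exact norm_det_inv_smul_fin_two hden hdet hD
  · rw [hsum, hprod]
    exact conj_trace_mul_det_inv_smul_fin_two hden hdet (conj_trace_transferNum_mul hM hE)
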